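/- Nonemptiness of testing ground-truths: if ρ* is a D-observation for an IO delay set D ⊆ ℝ≥0⁴ and t ≥ τ(ρ*), then the set of testing-consistent ground-truths ĜT_D(ρ*, t) is nonempty. -/

import Mathlib

open scoped Classical

universe u v w

/-- A finite timed word: nonnegative, non-decreasing timestamps. -/
def IsFTW {A : Type u} (ρ : List (A × ℝ)) : Prop :=
  (∀ p ∈ ρ, 0 ≤ p.2) ∧ ρ.Chain' (fun p q => p.2 ≤ q.2)

/-- Duration of a finite timed word: its last timestamp (0 for the empty word). -/
def dur {A : Type u} (ρ : List (A × ℝ)) : ℝ := ((ρ.getLast?).map Prod.snd).getD 0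

/-- An infinite timed word: nonnegative, non-decreasing, divergent timestamps. -/
def IsITW {A : Type u} (μ : ℕ → A × ℝ) : Prop :=
  (∀ i, 0 ≤ (μ i).2) ∧ (∀ i, (μ i).2 ≤ (μ (i + 1)).2) ∧
    Filter.Tendsto (fun i => (μ i).2) Filter.atTop Filter.atTop

/-- Shift every timestamp of an infinite timed word by `t`. -/
def shiftI {A : Type u} (μ : ℕ → A × ℝ) (t : ℝ) : ℕ → A × ℝ :=
  fun i => ((μ i).1, (μ i).2 + t)

/-- Shift every timestamp of a finite timed word by `t`. -/
def shiftF {A : Type u} (ρ : List (A × ℝ)) (t : ℝ) : List (A × ℝ) :=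
  ρ.map (fun p => (p.1, p.2 + t))

/-- Timed concatenation of two finite timed words at time `t`. -/
def catF {A : Type u} (ρ : List (A × ℝ)) (t : ℝ) (ρ' : List (A × ℝ)) : List (A × ℝ) :=
  ρ ++ shiftF ρ' t

/-- Timed concatenation `ρ ·_t μ` of a finite and an infinite timed word. -/
def cat {A : Type u} (ρ : List (A × ℝ)) (t : ℝ) (μ : ℕ → A × ℝ) : ℕ → A × ℝ :=
  fun i => if h : i < ρ.length then ρ.get ⟨i, h⟩
    else ((μ (i - ρ.length)).1, (μ (i - ρ.length)).2 + t)

/-- `ρ` is consistent with observation `ρs` at time `t` under latency `δ` and jitter `ε`. -/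
def Consistent {A : Type u} (δ ε : ℝ) (ρs ρ : List (A × ℝ)) (t : ℝ) : Prop :=
  IsFTW ρ ∧ dur ρ ≤ t ∧ dur ρs ≤ t ∧ ρs.length ≤ ρ.length ∧
  (∀ i, i < ρs.length → ∀ p q, ρ[i]? = some p → ρs[i]? = some q →
      p.1 = q.1 ∧ δ ≤ q.2 - p.2 ∧ q.2 - p.2 ≤ δ + ε) ∧
  (ρs.length < ρ.length → ∀ p, ρ[ρs.length]? = some p → t - (δ + ε) ≤ p.2)

/-- Ground-truths consistent with `ρs` at `t` under latency `δ` and jitter `ε`. -/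
def GTd {A : Type u} (δ ε : ℝ) (ρs : List (A × ℝ)) (t : ℝ) : Set (List (A × ℝ)) :=
  {ρ | Consistent δ ε ρs ρ t}

/-- Ground-truths consistent with `ρs` at `t` under some delay in `D`. -/
def GT {A : Type u} (D : Set (ℝ × ℝ)) (ρs : List (A × ℝ)) (t : ℝ) : Set (List (A × ℝ)) :=
  {ρ | ∃ d ∈ D, Consistent d.1 d.2 ρs ρ t}

/-- A delay set: a nonempty set of (latency, jitter) pairs in ℝ≥0². -/
def DelaySet (D : Set (ℝ × ℝ)) : Prop :=
  D.Nonempty ∧ ∀ d ∈ D, 0 ≤ d.1 ∧ 0 ≤ d.2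

/-- A `D`-observation: a finite timed word whose first timestamp is at least `δ`
for some `(δ,ε) ∈ D`. -/
def DObs {A : Type u} (D : Set (ℝ × ℝ)) (ρs : List (A × ℝ)) : Prop :=
  IsFTW ρs ∧ ∃ d ∈ D, ∀ p ∈ ρs.head?, d.1 ≤ p.2

/-- The three-valued verdict domain. -/
inductive Verdict | top | bot | unknown
deriving DecidableEq

/-- Monitoring verdict under delay. -/
noncomputable def verdict {A : Type u} (D : Set (ℝ × ℝ)) (L : Set (ℕ → A × ℝ))
    (ρs : List (A × ℝ)) (t : ℝ) : Verdict :=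
  if ∀ ρ ∈ GT D ρs t, ∀ μ, IsITW μ → cat ρ t μ ∈ L then .top
  else if ∀ ρ ∈ GT D ρs t, ∀ μ, IsITW μ → cat ρ t μ ∉ L then .bot
  else .unknown

/-- Equal-length consistent ground-truths. -/
def GTel {A : Type u} (δ ε : ℝ) (ρs : List (A × ℝ)) (t : ℝ) : Set (List (A × ℝ)) :=
  {ρ | Consistent δ ε ρs ρ t ∧ ρ.length = ρs.length}

/-- Equal-length monitoring verdict under delay. -/
noncomputable def verdictEL {A : Type u} (D : Set (ℝ × ℝ)) (L : Set (ℕ → A × ℝ))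
    (ρs : List (A × ℝ)) (t : ℝ) : Verdict :=
  if ∀ d ∈ D, ∀ ρ ∈ GTel d.1 d.2 ρs t, ∀ μ, IsITW μ →
      cat ρ (max (dur ρ) (t - (d.1 + d.2))) μ ∈ L then .top
  else if ∀ d ∈ D, ∀ ρ ∈ GTel d.1 d.2 ρs t, ∀ μ, IsITW μ →
      cat ρ (max (dur ρ) (t - (d.1 + d.2))) μ ∉ L then .bot
  else .unknown

/-- The set of delays consistent with observation `ρs` at time `t` w.r.t. `L`. -/
def ConsDelays {A : Type u} (L : Set (ℕ → A × ℝ)) (ρs : List (A × ℝ)) (t : ℝ) :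
    Set (ℝ × ℝ) :=
  {d | ∃ ρ ∈ GTd d.1 d.2 ρs t, ∃ μ, IsITW μ ∧ cat ρ t μ ∈ L}

/-- Extension relation on (finite timed word, time) pairs. -/
def ExtRel {A : Type u} (ρ : List (A × ℝ)) (t : ℝ) (ρ' : List (A × ℝ)) (t' : ℝ) : Prop :=
  ρ <+: ρ' ∧ ((ρ.length = ρ'.length ∧ t ≤ t') ∨
    (ρ.length < ρ'.length ∧ ∀ p, ρ'[ρ.length]? = some p → t ≤ p.2))
/-- A timed Büchi automaton with locations `Q` and clocks `C`;
guards are modeled as sets of clock valuations. -/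
structure TBA (A : Type u) (Q : Type v) (C : Type w) where
  init : Set Q
  trans : Set (Q × Q × A × Set C × Set (C → ℝ))
  acc : Set Q

/-- Reset the clocks in `lam` to zero. -/
noncomputable def resetVal {C : Type w} (lam : Set C) (v : C → ℝ) : C → ℝ :=
  fun x => if x ∈ lam then 0 else v x

/-- One transition step of a TBA, reading letter `a` after `d` time units. -/
def Step {A : Type u} {Q : Type v} {C : Type w} (M : TBA A Q C)
    (s : Q × (C → ℝ)) (a : A) (d : ℝ) (s' : Q × (C → ℝ)) : Prop :=
  ∃ q' lam g, (s.1, q', a, lam, g) ∈ M.trans ∧ (fun x => s.2 x + d) ∈ g ∧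
    s'.1 = q' ∧ s'.2 = resetVal lam (fun x => s.2 x + d)

/-- An infinite run of a TBA from state `s0` over the infinite timed word `μ`. -/
def InfRun {A : Type u} {Q : Type v} {C : Type w} (M : TBA A Q C)
    (s0 : Q × (C → ℝ)) (μ : ℕ → A × ℝ) (r : ℕ → Q × (C → ℝ)) : Prop :=
  r 0 = s0 ∧ ∀ i, Step M (r i) (μ i).1
    ((μ i).2 - (if i = 0 then 0 else (μ (i - 1)).2)) (r (i + 1))

/-- The language of a TBA from a given state. -/
def LangFrom {A : Type u} {Q : Type v} {C : Type w} (M : TBA A Q C)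
    (s : Q × (C → ℝ)) : Set (ℕ → A × ℝ) :=
  {μ | IsITW μ ∧ ∃ r, InfRun M s μ r ∧ {i | (r i).1 ∈ M.acc}.Infinite}

/-- The language of a TBA. -/
def Lang {A : Type u} {Q : Type v} {C : Type w} (M : TBA A Q C) : Set (ℕ → A × ℝ) :=
  {μ | ∃ q0 ∈ M.init, μ ∈ LangFrom M (q0, fun _ => 0)}

/-- The states of a TBA with nonempty language. -/
def NonEmptyStates {A : Type u} {Q : Type v} {C : Type w} (M : TBA A Q C) :
    Set (Q × (C → ℝ)) :=
  {s | (LangFrom M s).Nonempty}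

/-- The `i`-th timestamp of a finite timed word (default 0). -/
def tsd {A : Type u} (ρ : List (A × ℝ)) (i : ℕ) : ℝ := ((ρ[i]?).map Prod.snd).getD 0

/-- A finite run of a TBA from `s0` over `ρ`, ending in `send`. -/
def FinRun {A : Type u} {Q : Type v} {C : Type w} (M : TBA A Q C)
    (s0 : Q × (C → ℝ)) (ρ : List (A × ℝ)) (send : Q × (C → ℝ)) : Prop :=
  ∃ r : ℕ → Q × (C → ℝ), r 0 = s0 ∧ r ρ.length = send ∧
    ∀ i, i < ρ.length → ∀ p, ρ[i]? = some p →
      Step M (r i) p.1 (p.2 - (if i = 0 then 0 else tsd ρ (i - 1))) (r (i + 1))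

/-- The reach-set of `ρs` in `M` at `t` w.r.t. `D`: states reached on
equal-length consistent ground-truths, time-shifted by
`max 0 (t - (dur ρ + δ + ε))`. -/
def ReachSet {A : Type u} {Q : Type v} {C : Type w} (M : TBA A Q C)
    (D : Set (ℝ × ℝ)) (ρs : List (A × ℝ)) (t : ℝ) : Set (Q × (C → ℝ)) :=
  {s | ∃ d ∈ D, ∃ ρ ∈ GTel d.1 d.2 ρs t, ∃ q0 ∈ M.init, ∃ v : C → ℝ,
      FinRun M (q0, fun _ => 0) ρ (s.1, v) ∧
      s.2 = fun x => v x + max 0 (t - (dur ρ + d.1 + d.2))}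

/-- The automata-based monitor. -/
noncomputable def Monitor {A : Type u} {Q : Type v} {C : Type w} {Q' : Type*} {C' : Type*}
    (M : TBA A Q C) (Mbar : TBA A Q' C') (D : Set (ℝ × ℝ))
    (ρs : List (A × ℝ)) (t : ℝ) : Verdict :=
  if ReachSet Mbar D ρs t ∩ NonEmptyStates Mbar = ∅ then .top
  else if ReachSet M D ρs t ∩ NonEmptyStates M = ∅ then .bot
  else .unknown

/-- Input projection of a timed word, w.r.t. the input indicator `inp`. -/
def inProj {A : Type u} (inp : A → Bool) (ρ : List (A × ℝ)) : List (A × ℝ) :=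
  ρ.filter (fun p => inp p.1)

/-- Output projection of a timed word. -/
def outProj {A : Type u} (inp : A → Bool) (ρ : List (A × ℝ)) : List (A × ℝ) :=
  ρ.filter (fun p => !inp p.1)

/-- Testing consistency of ground-truth `ρ` with observation `ρs` at time `t`
under IO delay `d = (δ_I, ε_I, δ_O, ε_O)`. -/
def TCons {A : Type u} (inp : A → Bool) (d : ℝ × ℝ × ℝ × ℝ)
    (ρs ρ : List (A × ℝ)) (t : ℝ) : Prop :=
  IsFTW ρ ∧ dur ρs ≤ t ∧ dur ρ ≤ max t (dur (inProj inp ρs) + (d.1 + d.2.1)) ∧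
  (inProj inp ρ).length = (inProj inp ρs).length ∧
  (∀ (i : ℕ) (p q : A × ℝ), (inProj inp ρ)[i]? = some p → (inProj inp ρs)[i]? = some q →
      p.1 = q.1 ∧ d.1 ≤ p.2 - q.2 ∧ p.2 - q.2 ≤ d.1 + d.2.1) ∧
  (outProj inp ρs).length ≤ (outProj inp ρ).length ∧
  (∀ i, i < (outProj inp ρs).length → ∀ p q, (outProj inp ρ)[i]? = some p →
      (outProj inp ρs)[i]? = some q →
      p.1 = q.1 ∧ d.2.2.1 ≤ q.2 - p.2 ∧ q.2 - p.2 ≤ d.2.2.1 + d.2.2.2) ∧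
  ((outProj inp ρs).length < (outProj inp ρ).length →
    ∀ p, (outProj inp ρ)[(outProj inp ρs).length]? = some p →
      t - (d.2.2.1 + d.2.2.2) ≤ p.2)

/-- Testing-consistent ground-truths under some delay in `D`. -/
def GThat {A : Type u} (inp : A → Bool) (D : Set (ℝ × ℝ × ℝ × ℝ))
    (ρs : List (A × ℝ)) (t : ℝ) : Set (List (A × ℝ)) :=
  {ρ | ∃ d ∈ D, TCons inp d ρs ρ t}

/-- An IO delay set: nonempty subset of ℝ≥0⁴. -/
def IODelaySet (D : Set (ℝ × ℝ × ℝ × ℝ)) : Prop :=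
  D.Nonempty ∧ ∀ d ∈ D, 0 ≤ d.1 ∧ 0 ≤ d.2.1 ∧ 0 ≤ d.2.2.1 ∧ 0 ≤ d.2.2.2

/-- An IO `D`-observation: the first observed output has timestamp at least `δ_O`
for some delay tuple in `D`. -/
def DObsIO {A : Type u} (inp : A → Bool) (D : Set (ℝ × ℝ × ℝ × ℝ))
    (ρs : List (A × ℝ)) : Prop :=
  IsFTW ρs ∧ ∃ d ∈ D, ∀ p ∈ (outProj inp ρs).head?, d.2.2.1 ≤ p.2

/-- Testing verdict under delay. -/
noncomputable def tverdict {A : Type u} (inp : A → Bool) (D : Set (ℝ × ℝ × ℝ × ℝ))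
    (L : Set (ℕ → A × ℝ)) (ρs : List (A × ℝ)) (t : ℝ) : Verdict :=
  if ∀ ρ ∈ GThat inp D ρs t, ∀ μ, IsITW μ → cat ρ (max t (dur ρ)) μ ∈ L then .top
  else if ∀ ρ ∈ GThat inp D ρs t, ∀ μ, IsITW μ → cat ρ (max t (dur ρ)) μ ∉ L then .bot
  else .unknown

/-- The set of IO delays consistent with observation `ρs` at `t` w.r.t. `L`. -/
def TConsDelays {A : Type u} (inp : A → Bool) (L : Set (ℕ → A × ℝ))
    (ρs : List (A × ℝ)) (t : ℝ) : Set (ℝ × ℝ × ℝ × ℝ) :=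
  {d | ∃ ρ, TCons inp d ρs ρ t ∧ ∃ μ, IsITW μ ∧ cat ρ (max t (dur ρ)) μ ∈ L}

-- AUX

noncomputable def mrgT {A : Type u} : List (A × ℝ) → List (A × ℝ) → List (A × ℝ)
  | [], r => r
  | l, [] => l
  | a :: l, b :: r =>
      if a.2 ≤ b.2 then a :: mrgT l (b :: r) else b :: mrgT (a :: l) r
  termination_by l r => l.length + r.length

theorem mem_mrgT {A : Type u} {x : A × ℝ} :
    ∀ {l r : List (A × ℝ)}, x ∈ mrgT l r ↔ x ∈ l ∨ x ∈ r
  | [], r => by simp only [mrgT]; simp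
  | a :: l, [] => by simp only [mrgT]; simp
  | a :: l, b :: r => by
      have h1 := mem_mrgT (x := x) (l := l) (r := b :: r)
      have h2 := mem_mrgT (x := x) (l := a :: l) (r := r)
      simp only [mrgT]
      split <;> simp [List.mem_cons, h1, h2] <;> tauto
  termination_by l r => l.length + r.length

theorem filter_mrgT_left {A : Type u} (p : A × ℝ → Bool) :
    ∀ (l r : List (A × ℝ)), (∀ x ∈ l, p x = true) → (∀ x ∈ r, p x = false) →
      (mrgT l r).filter p = l
  | [], r => by
      intro _ hr
      simp only [mrgT]
      exact List.filter_eq_nil_iff.mpr (fun a ha => by simp [hr a ha])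
  | a :: l, [] => by
      intro hl _
      simp only [mrgT]
      exact List.filter_eq_self.mpr hl
  | a :: l, b :: r => by
      intro hl hr
      simp only [mrgT]
      split
      · rw [List.filter_cons_of_pos (hl a (by simp))]
        rw [filter_mrgT_left p l (b :: r) (fun x hx => hl x (by simp [hx])) hr]
      · rw [List.filter_cons_of_neg (by simp [hr b (by simp)])]
        exact filter_mrgT_left p (a :: l) r hl (fun x hx => hr x (by simp [hx]))
  termination_by l r => l.length + r.length

theorem filter_mrgT_right {A : Type u} (p : A × ℝ → Bool) :
    ∀ (l r : List (A × ℝ)), (∀ x ∈ l, p x = false) → (∀ x ∈ r, p x = true) →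
      (mrgT l r).filter p = r
  | [], r => by
      intro _ hr
      simp only [mrgT]
      exact List.filter_eq_self.mpr hr
  | a :: l, [] => by
      intro hl _
      simp only [mrgT]
      exact List.filter_eq_nil_iff.mpr (fun x hx => by simp [hl x hx])
  | a :: l, b :: r => by
      intro hl hr
      simp only [mrgT]
      split
      · rw [List.filter_cons_of_neg (by simp [hl a (by simp)])]
        exact filter_mrgT_right p l (b :: r) (fun x hx => hl x (by simp [hx])) hr
      · rw [List.filter_cons_of_pos (hr b (by simp))]
        rw [filter_mrgT_right p (a :: l) r hl (fun x hx => hr x (by simp [hx]))]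
  termination_by l r => l.length + r.length

theorem pairwise_mrgT {A : Type u} :
    ∀ {l r : List (A × ℝ)}, l.Pairwise (fun p q => p.2 ≤ q.2) →
      r.Pairwise (fun p q => p.2 ≤ q.2) →
      (mrgT l r).Pairwise (fun p q => p.2 ≤ q.2)
  | [], r => fun _ hr => by simp only [mrgT]; exact hr
  | a :: l, [] => fun hl _ => by simp only [mrgT]; exact hl
  | a :: l, b :: r => fun hl hr => by
      simp only [mrgT]
      rcases List.pairwise_cons.1 hl with ⟨hal, hl'⟩
      rcases List.pairwise_cons.1 hr with ⟨hbr, hr'⟩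
      split
      · rename_i hab
        refine List.pairwise_cons.2 ⟨?_, pairwise_mrgT hl' hr⟩
        intro x hx
        rcases mem_mrgT.1 hx with h | h
        · exact hal x h
        · rcases List.mem_cons.1 h with h | h
          · exact h ▸ hab
          · exact le_trans hab (hbr x h)
      · rename_i hab
        push_neg at hab
        refine List.pairwise_cons.2 ⟨?_, pairwise_mrgT hl hr'⟩
        intro x hx
        rcases mem_mrgT.1 hx with h | h
        · rcases List.mem_cons.1 h with h | h
          · exact h ▸ le_of_lt hab
          · exact le_trans (le_of_lt hab) (hal x h)
        · exact hbr x h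
  termination_by l r => l.length + r.length

theorem getLast?_mem' {α : Type*} {l : List α} {p : α} (h : l.getLast? = some p) :
    p ∈ l := by
  rcases List.mem_getLast?_eq_getLast h with ⟨hne, hpe⟩
  rw [hpe]
  exact List.getLast_mem hne

theorem dur_le_of_forall {A : Type u} {l : List (A × ℝ)} {c : ℝ}
    (hc : 0 ≤ c) (h : ∀ x ∈ l, x.2 ≤ c) : dur l ≤ c := by
  cases hl : l.getLast? with
  | none => simpa [dur, hl] using hc
  | some p => simpa [dur, hl] using h p (getLast?_mem' hl)

theorem forall_le_dur {A : Type u} {l : List (A × ℝ)}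
    (hs : l.Pairwise (fun p q => p.2 ≤ q.2)) : ∀ x ∈ l, x.2 ≤ dur l := by
  induction l with
  | nil => simp
  | cons a l ih =>
      rcases List.pairwise_cons.1 hs with ⟨ha, hs'⟩
      intro x hx
      cases l with
      | nil =>
          simp at hx
          simp [dur, hx]
      | cons b m =>
          have hd : dur (a :: b :: m) = dur (b :: m) := by
            simp [dur, List.getLast?_cons_cons]
          rcases List.mem_cons.1 hx with h | h
          · subst h
            rw [hd]
            exact le_trans (ha b (List.mem_cons_self))
              (ih hs' b (List.mem_cons_self))
          · exact hd ▸ ih hs' x h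

theorem mem_le_dur {A : Type u} {l : List (A × ℝ)}
    (hs : l.Pairwise (fun p q => p.2 ≤ q.2)) {x : A × ℝ} (hx : x ∈ l) :
    x.2 ≤ dur l := forall_le_dur hs x hx

theorem head_le_all {A : Type u} {l : List (A × ℝ)}
    (hs : l.Pairwise (fun p q => p.2 ≤ q.2)) {c : ℝ}
    (hh : ∀ p ∈ l.head?, c ≤ p.2) {x : A × ℝ} (hx : x ∈ l) : c ≤ x.2 := by
  cases l with
  | nil => simp at hx
  | cons a l =>
      have hca : c ≤ a.2 := hh a rfl
      rcases List.mem_cons.1 hx with h | h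
      · exact h ▸ hca
      · exact le_trans hca ((List.pairwise_cons.1 hs).1 x h)

/-- nonemptiness of testing ground-truths. -/
theorem stmt15 {A : Type u} (inp : A → Bool) (D : Set (ℝ × ℝ × ℝ × ℝ))
    (hD : IODelaySet D) (ρs : List (A × ℝ)) (hobs : DObsIO inp D ρs)
    (t : ℝ) (ht : dur ρs ≤ t) :
    (GThat inp D ρs t).Nonempty := by
  obtain ⟨hftw, d, hdD, hhead⟩ := hobs
  obtain ⟨hnn, hch⟩ := hftw
  obtain ⟨hδI, hεI, hδO, hεO⟩ := hD.2 d hdD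
  haveI : IsTrans (A × ℝ) (fun p q => p.2 ≤ q.2) := ⟨fun _ _ _ => le_trans⟩
  have hpw : ρs.Pairwise (fun p q => p.2 ≤ q.2) := List.isChain_iff_pairwise.1 hch
  set I := inProj inp ρs with hI
  set O := outProj inp ρs with hO
  have hpwI : I.Pairwise (fun p q => p.2 ≤ q.2) := hpw.sublist (List.filter_sublist)
  have hpwO : O.Pairwise (fun p q => p.2 ≤ q.2) := hpw.sublist (List.filter_sublist)
  -- candidate ground truth
  set L := shiftF I d.1 with hLdef
  set R := shiftF O (-d.2.2.1) with hRdef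
  set ρ := mrgT L R with hρ
  -- membership in L / R properties
  have hLinp : ∀ x ∈ L, inp x.1 = true := by
    intro x hx
    rcases List.mem_map.1 hx with ⟨y, hy, rfl⟩
    exact (List.mem_filter.1 hy).2
  have hRinp : ∀ x ∈ R, inp x.1 = false := by
    intro x hx
    rcases List.mem_map.1 hx with ⟨y, hy, rfl⟩
    simpa using (List.mem_filter.1 hy).2
  have hpwL : L.Pairwise (fun p q => p.2 ≤ q.2) := by
    refine List.pairwise_map.2 (hpwI.imp ?_)
    intro a b hab
    simpa using hab
  have hpwR : R.Pairwise (fun p q => p.2 ≤ q.2) := by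
    refine List.pairwise_map.2 (hpwO.imp ?_)
    intro a b hab
    simpa using hab
  have hpwρ : ρ.Pairwise (fun p q => p.2 ≤ q.2) := pairwise_mrgT hpwL hpwR
  -- projections of ρ
  have hinρ : inProj inp ρ = L := by
    rw [hρ, inProj]
    exact filter_mrgT_left _ _ _ hLinp (by intro x hx; simpa using hRinp x hx)
  have houtρ : outProj inp ρ = R := by
    rw [hρ, outProj]
    refine filter_mrgT_right _ _ _ ?_ ?_
    · intro x hx; simp [hLinp x hx]
    · intro x hx; simp [hRinp x hx]
  -- nonnegativity
  have hOmem : ∀ y ∈ O, d.2.2.1 ≤ y.2 := fun y hy => head_le_all hpwO hhead hy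
  have hnnρ : ∀ x ∈ ρ, 0 ≤ x.2 := by
    intro x hx
    rcases mem_mrgT.1 hx with h | h
    · rcases List.mem_map.1 h with ⟨y, hy, rfl⟩
      have := hnn y (List.mem_of_mem_filter hy)
      simp only
      linarith
    · rcases List.mem_map.1 h with ⟨y, hy, rfl⟩
      have := hOmem y hy
      simp only
      linarith
  -- 0 ≤ t
  have h0t : 0 ≤ t := by
    refine le_trans ?_ ht
    cases hlast : ρs.getLast? with
    | none => simp [dur, hlast]
    | some p => simpa [dur, hlast] using hnn p (getLast?_mem' hlast)
  -- dur bound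
  have hdurρ : dur ρ ≤ max t (dur I + (d.1 + d.2.1)) := by
    refine dur_le_of_forall (le_trans h0t (le_max_left _ _)) ?_
    intro x hx
    rcases mem_mrgT.1 hx with h | h
    · rcases List.mem_map.1 h with ⟨y, hy, rfl⟩
      have := mem_le_dur hpwI hy
      refine le_trans ?_ (le_max_right _ _)
      simp only
      linarith
    · rcases List.mem_map.1 h with ⟨y, hy, rfl⟩
      have h1 : y.2 ≤ dur ρs := mem_le_dur hpw (List.mem_of_mem_filter hy)
      refine le_trans ?_ (le_max_left _ _)
      simp only
      linarith
  refine ⟨ρ, d, hdD, ⟨hnnρ, List.isChain_iff_pairwise.2 hpwρ⟩, ht, hdurρ, ?_, ?_, ?_, ?_, ?_⟩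
  · rw [hinρ, hLdef, shiftF, List.length_map]
  · intro i p q hp hq
    rw [hinρ, hLdef, shiftF, List.getElem?_map, hq] at hp
    simp only [Option.map_some] at hp
    cases hp.symm
    refine ⟨rfl, by simp, by simp; linarith⟩
  · rw [houtρ, hRdef, shiftF, List.length_map]
  · intro i _ p q hp hq
    rw [houtρ, hRdef, shiftF, List.getElem?_map, hq] at hp
    simp only [Option.map_some] at hp
    cases hp.symm
    refine ⟨rfl, by simp, by simp; linarith⟩
  · intro hlt
    rw [houtρ, hRdef, shiftF, List.length_map] at hlt
    exact absurd hlt (lt_irrefl _)
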